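/- arXiv:1807.00535 — 3 statements merged into one kernel-verified Lean document; each statement's English description precedes it below -/
import Mathlib

section
/- Let F be a field of characteristic different from 2, let A be a central simple F-algebra and let σ be an anisotropic involution of the first kind on A (i.e., σ(x)·x = 0 implies x = 0). Let a ∈ F^×, K = F(u) a quadratic field extension with u² = a, ι the nontrivial F-automorphism of K. If (A ⊗_F K, σ ⊗ ι) is hyperbolic, then there exists s ∈ A with σ(s) = s and s² = a·1. -/
open scoped TensorProduct

/-!
Write `e = x ⊗ 1 + y ⊗ u`. Then `(σ ⊗ ι) e = 1 - e` says `σ x = 1 - x` and `σ y = y`, while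
`e * e = e` says `x - x² = a y²` and `x y + y x = y`. Since `σ (x z) (x z)` and
`σ ((1 - x) z) ((1 - x) z)` both equal `σ z (x - x²) z`, anisotropy makes left multiplication by
`x - x² = a y²`, hence by `y`, injective. So `y` is a unit of the finite-dimensional algebra `A`,
and `s = y⁻¹ x` is symmetric with `s² = y⁻² (x - x²) = a`.
-/

section Coordinates

variable {R M N : Type*} [CommRing R] [AddCommGroup M] [Module R M] [AddCommGroup N]
  [Module R N] {n₀ n₁ : N}

theorem TensorProduct.exists_eq_tmul_add_tmul
    (hsp : ⊤ ≤ Submodule.span R (Set.range ![n₀, n₁])) (z : M ⊗[R] N) :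
    ∃ x y : M, z = x ⊗ₜ n₀ + y ⊗ₜ n₁ := by
  induction z using TensorProduct.induction_on with
  | zero => exact ⟨0, 0, by simp⟩
  | tmul m n =>
    obtain ⟨c₀, c₁, hn⟩ :=
      Submodule.mem_span_pair.mp (by simpa using hsp (Submodule.mem_top (x := n)))
    exact ⟨c₁ • m, c₀ • m, by
      rw [← hn, TensorProduct.tmul_add, add_comm, TensorProduct.smul_tmul,
        TensorProduct.smul_tmul]⟩
  | add z z' hz hz' =>
    obtain ⟨x, y, rfl⟩ := hz
    obtain ⟨x', y', rfl⟩ := hz'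
    exact ⟨x + x', y + y', by simp only [TensorProduct.add_tmul]; abel⟩

theorem TensorProduct.tmul_add_tmul_eq_tmul_add_tmul_iff (hli : LinearIndependent R ![n₀, n₁])
    (hsp : ⊤ ≤ Submodule.span R (Set.range ![n₀, n₁])) {x y x' y' : M} :
    x ⊗ₜ n₀ + y ⊗ₜ n₁ = x' ⊗ₜ[R] n₀ + y' ⊗ₜ n₁ ↔ x = x' ∧ y = y' := by
  refine ⟨fun h => ?_, by rintro ⟨rfl, rfl⟩; rfl⟩
  let b := Module.Basis.mk hli hsp
  have h := congr(TensorProduct.equivFinsuppOfBasisRight b $h)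
  have hb₀ : n₀ = b 0 := by simp [b]
  have hb₁ : n₁ = b 1 := by simp [b]
  rw [hb₀, hb₁] at h
  exact ⟨by simpa using congr($h 0), by simpa using congr($h 1)⟩

end Coordinates

theorem linearIndependent_one_of_adjoin_eq_top {F K : Type*} [Field F] [Ring K] [Algebra F K]
    (hK : Module.finrank F K = 2) {u : K} (hgen : Algebra.adjoin F {u} = ⊤) :
    LinearIndependent F ![1, u] := by
  have : Nontrivial K := Module.nontrivial_of_finrank_eq_succ hK
  refine (LinearIndependent.pair_iff' one_ne_zero).mpr fun c hc => ?_
  have hbot : (⊥ : Subalgebra F K) = ⊤ := by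
    rw [← hgen, eq_comm, eq_bot_iff, Algebra.adjoin_le_iff, Set.singleton_subset_iff, ← hc,
      ← Algebra.algebraMap_eq_smul_one]
    exact Subalgebra.algebraMap_mem _ c
  have := Subalgebra.bot_eq_top_iff_finrank_eq_one.mp hbot
  omega

section QuadraticExtension

variable {F A K : Type*} [CommRing F] [Ring A] [Algebra F A] [Ring K] [Algebra F K] {u : K}

theorem tmul_one_add_tmul_mul_self_eq_iff (hli : LinearIndependent F ![1, u])
    (hsp : ⊤ ≤ Submodule.span F (Set.range ![1, u])) {a : F} (hu : u * u = algebraMap F K a)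
    {x y : A} :
    (x ⊗ₜ[F] (1 : K) + y ⊗ₜ u) * (x ⊗ₜ 1 + y ⊗ₜ u) = x ⊗ₜ 1 + y ⊗ₜ u ↔
      x * x + a • (y * y) = x ∧ x * y + y * x = y := by
  have hsq : (x ⊗ₜ[F] (1 : K) + y ⊗ₜ u) * (x ⊗ₜ 1 + y ⊗ₜ u) =
      (x * x + a • (y * y)) ⊗ₜ 1 + (x * y + y * x) ⊗ₜ u := by
    simp only [add_mul, mul_add, Algebra.TensorProduct.tmul_mul_tmul, one_mul, mul_one, hu,
      Algebra.algebraMap_eq_smul_one, TensorProduct.tmul_smul, ← TensorProduct.smul_tmul',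
      TensorProduct.add_tmul]
    abel
  rw [hsq, TensorProduct.tmul_add_tmul_eq_tmul_add_tmul_iff hli hsp]

theorem map_tmul_one_add_tmul_eq_one_sub_iff (hli : LinearIndependent F ![1, u])
    (hsp : ⊤ ≤ Submodule.span F (Set.range ![1, u])) (σ : A →ₗ[F] A) (ι : K →ₗ[F] K)
    (hι1 : ι 1 = 1) (hι : ι u = -u) {x y : A} :
    TensorProduct.map σ ι (x ⊗ₜ[F] (1 : K) + y ⊗ₜ u) = 1 - (x ⊗ₜ 1 + y ⊗ₜ u) ↔
      σ x = 1 - x ∧ σ y = y := by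
  have hlhs : TensorProduct.map σ ι (x ⊗ₜ[F] (1 : K) + y ⊗ₜ u) = σ x ⊗ₜ 1 + (-σ y) ⊗ₜ u := by
    simp [hι1, hι, TensorProduct.tmul_neg, TensorProduct.neg_tmul]
  have hrhs : (1 : A ⊗[F] K) - (x ⊗ₜ 1 + y ⊗ₜ u) = (1 - x) ⊗ₜ 1 + (-y) ⊗ₜ u := by
    rw [Algebra.TensorProduct.one_def, TensorProduct.sub_tmul, TensorProduct.neg_tmul]
    abel
  rw [hlhs, hrhs, TensorProduct.tmul_add_tmul_eq_tmul_add_tmul_iff hli hsp, neg_inj]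

end QuadraticExtension

theorem IsLeftRegular.isUnit_of_finiteDimensional (F : Type*) {A : Type*} [Field F] [Ring A]
    [Algebra F A] [FiniteDimensional F A] {y : A} (hy : IsLeftRegular y) : IsUnit y :=
  IsUnit.isUnit_iff_mulLeft_bijective.mpr
    ⟨hy, LinearMap.injective_iff_surjective (f := LinearMap.mulLeft F y) |>.mp hy⟩

section AntiInvolution

variable {F A : Type*} [CommSemiring F] [Ring A] [Algebra F A] {σ : A →ₗ[F] A}

theorem map_one_of_map_mul_rev (hσmul : ∀ x y : A, σ (x * y) = σ y * σ x)
    (hσinv : ∀ x : A, σ (σ x) = x) : σ 1 = 1 := by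
  simpa [hσinv] using (hσmul (σ 1) 1).symm

theorem eq_zero_of_sub_mul_self_mul_eq_zero (hσmul : ∀ x y : A, σ (x * y) = σ y * σ x)
    (hσ1 : σ 1 = 1) (haniso : ∀ x : A, σ x * x = 0 → x = 0) {x z : A} (hσx : σ x = 1 - x)
    (hz : (x - x * x) * z = 0) : z = 0 := by
  have hσx' : σ (1 - x) = x := by rw [map_sub, hσ1, hσx, sub_sub_cancel]
  have hxz : x * z = 0 := haniso _ <| by
    calc σ (x * z) * (x * z) = σ z * ((x - x * x) * z) := by rw [hσmul, hσx]; noncomm_ring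
      _ = 0 := by rw [hz, mul_zero]
  have hxz' : (1 - x) * z = 0 := haniso _ <| by
    calc σ ((1 - x) * z) * ((1 - x) * z) = σ z * ((x - x * x) * z) := by
          rw [hσmul, hσx']; noncomm_ring
      _ = 0 := by rw [hz, mul_zero]
  calc z = x * z + (1 - x) * z := by noncomm_ring
    _ = 0 := by rw [hxz, hxz', add_zero]

theorem exists_map_eq_self_and_mul_self_eq_algebraMap
    (hσmul : ∀ x y : A, σ (x * y) = σ y * σ x) (hσ1 : σ 1 = 1) {a : F} {x y : A} (hy : IsUnit y)
    (hσx : σ x = 1 - x) (hσy : σ y = y)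
    (hxx : x * x + a • (y * y) = x) (hxy : x * y + y * x = y) :
    ∃ s : A, σ s = s ∧ s * s = algebraMap F A a := by
  obtain ⟨v, rfl⟩ := hy
  have hσw : σ ↑v⁻¹ = ↑v⁻¹ := by
    refine Units.eq_inv_of_mul_eq_one_left ?_
    rw [← hσy, ← hσmul, Units.inv_mul, hσ1]
  have hxw : x * ↑v⁻¹ = ↑v⁻¹ - ↑v⁻¹ * x := by
    calc x * ↑v⁻¹ = ↑v⁻¹ * ((x * v + v * x) * ↑v⁻¹) - ↑v⁻¹ * x := by
          simp only [add_mul, mul_add, mul_assoc, Units.mul_inv, Units.inv_mul_cancel_left]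
          noncomm_ring
      _ = ↑v⁻¹ - ↑v⁻¹ * x := by rw [hxy, Units.mul_inv, mul_one]
  refine ⟨↑v⁻¹ * x, ?_, ?_⟩
  · rw [hσmul, hσx, hσw, sub_mul, one_mul, hxw, sub_sub_cancel]
  · calc ↑v⁻¹ * x * (↑v⁻¹ * x) = ↑v⁻¹ * ↑v⁻¹ * (x - x * x) := by
          rw [mul_assoc, ← mul_assoc x, hxw]; noncomm_ring
      _ = algebraMap F A a := by
          rw [sub_eq_iff_eq_add'.mpr hxx.symm, mul_smul_comm, mul_assoc,
            Units.inv_mul_cancel_left, Units.inv_mul, Algebra.algebraMap_eq_smul_one]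

theorem isLeftRegular_of_mul_self_add_smul_mul_self_eq
    (hσmul : ∀ x y : A, σ (x * y) = σ y * σ x) (hσ1 : σ 1 = 1)
    (haniso : ∀ x : A, σ x * x = 0 → x = 0) {a : F} {x y : A} (hσx : σ x = 1 - x)
    (hxx : x * x + a • (y * y) = x) : IsLeftRegular y :=
  isLeftRegular_iff_right_eq_zero_of_mul.mpr fun z hz =>
    eq_zero_of_sub_mul_self_mul_eq_zero hσmul hσ1 haniso hσx <| by
      rw [sub_eq_iff_eq_add'.mpr hxx.symm, smul_mul_assoc, mul_assoc, hz, mul_zero, smul_zero]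

end AntiInvolution

theorem exists_symmetric_square_root_of_hyperbolic_of_anisotropic_general
    (F A K : Type*) [Field F] [Ring A] [Algebra F A]
    [FiniteDimensional F A]
    (σ : A →ₗ[F] A) (hσmul : ∀ x y : A, σ (x * y) = σ y * σ x)
    (hσinv : ∀ x : A, σ (σ x) = x)
    (haniso : ∀ x : A, σ x * x = 0 → x = 0)
    [Field K] [Algebra F K] (hquad : Module.finrank F K = 2)
    (a : F)
    (u : K) (hu : u * u = algebraMap F K a) (hgen : Algebra.adjoin F {u} = ⊤)
    (ι : K ≃ₐ[F] K) (hι : ι u = -u)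
    (hhyp : ∃ e : A ⊗[F] K, e * e = e ∧ TensorProduct.map σ ι.toLinearMap e = 1 - e) :
    ∃ s : A, σ s = s ∧ s * s = algebraMap F A a := by
  obtain ⟨e, he_idem, he_hyp⟩ := hhyp
  have hli := linearIndependent_one_of_adjoin_eq_top hquad hgen
  have hsp := (hli.span_eq_top_of_card_eq_finrank (by simp [hquad])).ge
  obtain ⟨x, y, rfl⟩ := TensorProduct.exists_eq_tmul_add_tmul hsp e
  obtain ⟨hxx, hxy⟩ := (tmul_one_add_tmul_mul_self_eq_iff hli hsp hu).mp he_idem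
  obtain ⟨hσx, hσy⟩ :=
    (map_tmul_one_add_tmul_eq_one_sub_iff hli hsp σ ι.toLinearMap (map_one ι) hι).mp he_hyp
  have hσ1 := map_one_of_map_mul_rev hσmul hσinv
  have hy := (isLeftRegular_of_mul_self_add_smul_mul_self_eq hσmul hσ1 haniso hσx hxx)
    |>.isUnit_of_finiteDimensional F
  exact exists_map_eq_self_and_mul_self_eq_algebraMap hσmul hσ1 hy hσx hσy hxx hxy

/-- Let `F` be a field of characteristic different from 2, `A` a central
simple `F`-algebra with an *anisotropic* involution `σ` of the first kind, `a ∈ F^×`,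
`K = F(u)` a quadratic field extension with `u² = a`, and `ι` the nontrivial
`F`-automorphism of `K`.  If `(A ⊗_F K, σ ⊗ ι)` is hyperbolic, then there is `s ∈ A`
with `σ s = s` and `s² = a·1`. -/
theorem exists_symmetric_square_root_of_hyperbolic_of_anisotropic
    (F A K : Type*) [Field F] [Ring A] [Algebra F A]
    (h2 : (2 : F) ≠ 0)
    [Algebra.IsCentral F A] [IsSimpleRing A] [FiniteDimensional F A]
    (σ : A →ₗ[F] A) (hσmul : ∀ x y : A, σ (x * y) = σ y * σ x)
    (hσinv : ∀ x : A, σ (σ x) = x)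
    (haniso : ∀ x : A, σ x * x = 0 → x = 0)
    [Field K] [Algebra F K] (hquad : Module.finrank F K = 2)
    (a : F) (ha : a ≠ 0)
    (u : K) (hu : u * u = algebraMap F K a) (hgen : Algebra.adjoin F {u} = ⊤)
    (ι : K ≃ₐ[F] K) (hι : ι u = -u)
    (hhyp : ∃ e : A ⊗[F] K, e * e = e ∧ TensorProduct.map σ ι.toLinearMap e = 1 - e) :
    ∃ s : A, σ s = s ∧ s * s = algebraMap F A a :=
  exists_symmetric_square_root_of_hyperbolic_of_anisotropic_general F A K σ hσmul hσinv haniso hquad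
    a u hu hgen ι hι hhyp
end

section
/- Let F be a field of characteristic different from 2, let m = 2n with n odd, let J ∈ M_m(F) be invertible with Jᵀ = −J, and let σ be the symplectic involution on M_m(F) defined by σ(X) = J⁻¹ Xᵀ J. Then there is no s ∈ M_m(F) with σ(s) = s and s² = λ·I for some λ ∈ F^× that is not a square in F. -/
/-!
Extend scalars to `K = F(√λ)`, realised as `QuadraticAlgebra F λ 0` with `u = ω` and the
conjugation `star`. Then `P = (2u)⁻¹ (s + u)` is an idempotent that is self-adjoint for the
alternating form `J`, so its range is a nondegenerate alternating subspace and has even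
dimension `r`. Conjugation fixes `s` and sends `P` to `1 - P`, whose rank is `m - r`; hence
`m = 2r` is divisible by 4, which is impossible for `m = 2n` with `n` odd.
-/

open Module LinearMap Matrix
open LinearMap (BilinForm)

theorem Matrix.det_eq_zero_of_transpose_eq_neg {R n : Type*} [CommRing R] [NoZeroDivisors R]
    [Fintype n] [DecidableEq n] (h2 : (2 : R) ≠ 0) {A : Matrix n n R} (hA : Aᵀ = -A)
    (hn : Odd (Fintype.card n)) : A.det = 0 := by
  have h : A.det = -A.det := by
    conv_lhs => rw [← det_transpose, hA]
    rw [det_neg, hn.neg_one_pow, neg_one_mul]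
  have h' : 2 * A.det = 0 := by linear_combination h
  exact (mul_eq_zero.mp h').resolve_left h2

namespace LinearMap.BilinForm

variable {K V : Type*} [Field K] [AddCommGroup V] [Module K V]

theorem IsAlt.even_finrank [FiniteDimensional K V] (h2 : (2 : K) ≠ 0) {B : BilinForm K V}
    (hB : B.IsAlt) (hnd : B.Nondegenerate) : Even (finrank K V) := by
  let b := finBasis K V
  have hskew : (toMatrix b B)ᵀ = -toMatrix b B := by
    ext i j
    simp [toMatrix_apply, hB.neg_eq]
  by_contra hodd
  refine (nondegenerate_iff_det_ne_zero b).mp hnd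
    (Matrix.det_eq_zero_of_transpose_eq_neg h2 hskew ?_)
  simpa using Nat.not_even_iff_odd.mp hodd

theorem nondegenerate_restrict_range_of_isIdempotentElem {R M : Type*} [CommRing R]
    [AddCommGroup M] [Module R M] {B : BilinForm R M} (hB : B.IsRefl) (hnd : B.Nondegenerate)
    {f : Module.End R M} (hf : IsIdempotentElem f) (hfB : IsAdjointPair B B f f) :
    (B.restrict (range f)).Nondegenerate := by
  refine nondegenerate_restrict_of_disjoint_orthogonal B hB ?_
  refine Submodule.disjoint_def.mpr fun v hv hvorth => ?_
  obtain ⟨x, rfl⟩ := hv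
  refine hnd.2 _ fun y => ?_
  calc B y (f x) = B y (f (f x)) := by rw [← Module.End.mul_apply, hf.eq]
    _ = B (f y) (f x) := (hfB y (f x)).symm
    _ = 0 := hvorth _ ⟨y, rfl⟩

theorem IsAlt.even_finrank_range_of_isIdempotentElem [FiniteDimensional K V] (h2 : (2 : K) ≠ 0)
    {B : BilinForm K V} (hB : B.IsAlt) (hnd : B.Nondegenerate) {f : Module.End K V}
    (hf : IsIdempotentElem f) (hfB : IsAdjointPair B B f f) :
    Even (finrank K (range f)) :=
  IsAlt.even_finrank (B := B.restrict (range f)) h2 (fun x => hB x)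
    (nondegenerate_restrict_range_of_isIdempotentElem hB.isRefl hnd hf hfB)

end LinearMap.BilinForm

theorem isIdempotentElem_inv_smul_add_smul_one {K A : Type*} [Field K] [Ring A] [Algebra K A]
    (h2 : (2 : K) ≠ 0) {s : A} {u : K} (hu : u ≠ 0) (hs : s * s = (u * u) • 1) :
    IsIdempotentElem ((2 * u)⁻¹ • (s + u • 1)) := by
  have hsq : (s + u • 1) * (s + u • 1) = (2 * u) • (s + u • 1) := by
    simp only [add_mul, mul_add, hs, smul_mul_assoc, mul_smul_comm, one_mul, mul_one]
    module
  rw [IsIdempotentElem, smul_mul_smul_comm, hsq, smul_smul, mul_assoc,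
    inv_mul_cancel₀ (mul_ne_zero h2 hu), mul_one]

namespace QuadraticAlgebra

variable {F : Type*} [CommRing F] {a b : F}

theorem star_algebraMap (r : F) :
    star (algebraMap F (QuadraticAlgebra F a b) r) = algebraMap F _ r := by
  ext <;> simp [algebraMap_eq]

theorem star_omega : star (ω : QuadraticAlgebra F a 0) = -ω := by
  ext <;> simp

end QuadraticAlgebra

namespace Matrix

theorem rank_map_ringEquiv {R m n : Type*} [CommRing R] [Fintype n] (g : R ≃+* R)
    (A : Matrix m n R) : (A.map g).rank = A.rank := by
  let em : (m → R) ≃+ (m → R) := AddEquiv.piCongrRight fun _ => g.toAddEquiv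
  let en : (n → R) ≃+ (n → R) := AddEquiv.piCongrRight fun _ => g.toAddEquiv
  have he : ∀ v, em (A *ᵥ v) = A.map g *ᵥ en v := fun v => by
    ext i
    simp [em, en, mulVec, dotProduct, map_sum]
  have hmem : ∀ w, w ∈ range A.mulVecLin ↔ em w ∈ range (A.map g).mulVecLin := fun w => by
    refine ⟨fun ⟨v, hv⟩ => ⟨en v, by simp [← hv, he]⟩, fun ⟨v, hv⟩ => ⟨en.symm v, ?_⟩⟩
    apply em.injective
    simpa [he] using hv
  let j : range A.mulVecLin ≃+ range (A.map g).mulVecLin :=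
    { em.toEquiv.subtypeEquiv hmem with map_add' := fun _ _ => Subtype.ext (map_add em _ _) }
  have h := rank_eq_of_equiv_equiv g j g.bijective fun r w =>
    Subtype.ext <| funext fun i => map_mul g r (w.1 i)
  simp only [rank, finrank, h]

variable {K n : Type*} [Field K] [Fintype n] [DecidableEq n]

theorem isAlt_toBilin'_of_transpose_eq_neg (h2 : (2 : K) ≠ 0) {J : Matrix n n K} (hJ : Jᵀ = -J) :
    (toBilin' J).IsAlt := by
  intro v
  have h : v ⬝ᵥ J *ᵥ v = -(v ⬝ᵥ J *ᵥ v) := by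
    conv_lhs => rw [dotProduct_mulVec, ← mulVec_transpose, hJ, neg_mulVec, neg_dotProduct,
      dotProduct_comm]
  have h' : 2 * (v ⬝ᵥ J *ᵥ v) = 0 := by linear_combination h
  simpa [toBilin'_apply'] using (mul_eq_zero.mp h').resolve_left h2

theorem even_rank_of_isIdempotentElem_of_isSelfAdjoint (h2 : (2 : K) ≠ 0) {J P : Matrix n n K}
    (hJt : Jᵀ = -J) (hJ : J.det ≠ 0) (hP : IsIdempotentElem P) (hPJ : J.IsSelfAdjoint P) :
    Even P.rank := by
  rw [rank, ← toLin'_apply']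
  exact (isAlt_toBilin'_of_transpose_eq_neg h2 hJt).even_finrank_range_of_isIdempotentElem h2
    (BilinForm.nondegenerate_toBilin'_iff_det_ne_zero.mpr hJ) (hP.map toLinAlgEquiv')
    ((isAdjointPair_toLinearMap₂' J J P P).mpr hPJ)

theorem rank_add_rank_one_sub_of_isIdempotentElem {P : Matrix n n K} (hP : IsIdempotentElem P) :
    P.rank + (1 - P).rank = Fintype.card n := by
  have hP' : IsIdempotentElem (toLin' P) := hP.map toLinAlgEquiv'
  rw [rank, rank, ← toLin'_apply', ← toLin'_apply', map_sub, toLin'_one, ← Module.End.one_eq_id,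
    ← hP'.ker_eq_range_one_sub, ← finrank_fintype_fun_eq_card K]
  exact (toLin' P).finrank_range_add_finrank_ker

theorem four_dvd_card_of_isSelfAdjoint_of_ringEquiv (h2 : (2 : K) ≠ 0) {J s : Matrix n n K}
    (hJt : Jᵀ = -J) (hJ : J.det ≠ 0) (hs : J.IsSelfAdjoint s) {u : K} (hu : u ≠ 0)
    (hsu : s * s = (u * u) • 1) (g : K ≃+* K) (hgs : s.map g = s) (hgu : g u = -u) :
    4 ∣ Fintype.card n := by
  set P := (2 * u)⁻¹ • (s + u • 1 : Matrix n n K)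
  have hP : IsIdempotentElem P := isIdempotentElem_inv_smul_add_smul_one h2 hu hsu
  have hPJ : J.IsSelfAdjoint P := by
    have hs' : sᵀ * J = J * s := hs
    simp only [P, Matrix.IsSelfAdjoint, IsAdjointPair, transpose_smul, transpose_add,
      transpose_one, smul_mul, add_mul, one_mul, hs']
    rw [Matrix.mul_smul, mul_add, Matrix.mul_smul, mul_one]
  have hPg : P.map g = 1 - P := by
    rw [map_smul' _ _ _ (map_mul g), Matrix.map_add _ (map_add g), map_smul' _ _ _ (map_mul g),
      hgs, Matrix.map_one _ (map_zero g) (map_one g), map_inv₀, map_mul, hgu, map_ofNat, mul_neg,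
      inv_neg]
    linear_combination (norm := module)
      inv_mul_cancel₀ (mul_ne_zero h2 hu) • (1 : Matrix n n K)
  obtain ⟨k, hk⟩ := even_rank_of_isIdempotentElem_of_isSelfAdjoint h2 hJt hJ hP hPJ
  have hsum := rank_add_rank_one_sub_of_isIdempotentElem hP
  rw [← hPg, rank_map_ringEquiv] at hsum
  exact ⟨k, by omega⟩


open QuadraticAlgebra in
theorem four_dvd_card_of_isSelfAdjoint_of_not_isSquare (h2 : (2 : K) ≠ 0) {J s : Matrix n n K}
    (hJt : Jᵀ = -J) (hJ : J.det ≠ 0) (hs : J.IsSelfAdjoint s) {lam : K} (hlam : ¬IsSquare lam)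
    (hsl : s * s = lam • 1) : 4 ∣ Fintype.card n := by
  have : Fact (∀ r : K, r ^ 2 ≠ lam + 0 * r) := ⟨fun r hr => hlam ⟨r, by simpa [sq] using hr.symm⟩⟩
  let φ := algebraMap K (QuadraticAlgebra K lam 0)
  refine four_dvd_card_of_isSelfAdjoint_of_ringEquiv (J := J.map φ) (s := s.map φ) (u := ω)
    ?_ ?_ ?_ ?_ ?_ ?_ starRingAut ?_ ?_
  · rw [← map_ofNat φ 2]
    exact (map_ne_zero φ).mpr h2
  · rw [← transpose_map, hJt, Matrix.map_neg _ (map_neg φ)]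
  · rw [← RingHom.mapMatrix_apply, ← RingHom.map_det]
    exact (map_ne_zero φ).mpr hJ
  · rw [Matrix.IsSelfAdjoint, IsAdjointPair, ← transpose_map, ← Matrix.map_mul,
      ← Matrix.map_mul, show sᵀ * J = J * s from hs]
  · exact fun h => by simpa using congrArg QuadraticAlgebra.im h
  · rw [← Matrix.map_mul, hsl, omega_mul_omega_eq_algebraMap, map_zero, zero_mul, add_zero,
      Matrix.map_smul' _ _ _ (map_mul φ), Matrix.map_one _ (map_zero φ) (map_one φ)]
  · rw [Matrix.map_map]
    congr 1
    funext x
    exact star_algebraMap x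
  · simp [star_omega]

end Matrix

/-- Let `F` be a field of characteristic different from 2, `m = 2n` with
`n` odd, `J ∈ M_m(F)` invertible with `Jᵀ = -J`, and let `σ(X) = J⁻¹ Xᵀ J` be the
corresponding symplectic involution on `M_m(F)`.  Then no `s ∈ M_m(F)` satisfies
`σ s = s` and `s² = λ·1` for a nonsquare `λ ∈ F^×`. -/
theorem no_symmetric_square_root_of_nonsquare_split_symplectic
    (F : Type*) [Field F] (h2 : (2 : F) ≠ 0)
    (n : ℕ) (hn : Odd n) (m : ℕ) (hm : m = 2 * n)
    (J : Matrix (Fin m) (Fin m) F) (hJ : IsUnit J) (hJt : J.transpose = -J) :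
    ¬ ∃ (s : Matrix (Fin m) (Fin m) F) (lam : F),
        lam ≠ 0 ∧ (¬ ∃ b : F, b * b = lam) ∧
        J⁻¹ * s.transpose * J = s ∧ s * s = lam • (1 : Matrix (Fin m) (Fin m) F) := by
  rintro ⟨s, lam, -, hlam, hσ, hs⟩
  have hJdet : IsUnit J.det := (isUnit_iff_isUnit_det J).mp hJ
  have hsJ : J.IsSelfAdjoint s :=
    calc sᵀ * J = J * (J⁻¹ * sᵀ * J) := by
          rw [← Matrix.mul_assoc, ← Matrix.mul_assoc, mul_nonsing_inv J hJdet, Matrix.one_mul]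
      _ = J * s := by rw [hσ]
  have h4 := four_dvd_card_of_isSelfAdjoint_of_not_isSquare h2 hJt hJdet.ne_zero hsJ
    (fun ⟨b, hb⟩ => hlam ⟨b, hb.symm⟩) hs
  rw [Fintype.card_fin] at h4
  obtain ⟨k, rfl⟩ := hn
  omega
end

section
/- Let k be a field of characteristic 0, A a central simple k-algebra, and σ an involution of the first kind on A. Let B̂ = A((ξ)) be the ring of formal Laurent series over A with the unitary involution τ̂(∑ a_i ξ^i) = ∑ (−1)^i σ(a_i) ξ^i. Then (A,σ) is isotropic if and only if (B̂,τ̂) is isotropic; that is, there exists a nonzero a ∈ A with σ(a)·a = 0 if and only if there exists a nonzero y ∈ B̂ with τ̂(y)·y = 0. -/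
noncomputable section

/-- The involution `τ̂(∑ aᵢ ξ^i) = ∑ (−1)^i σ(aᵢ) ξ^i` on the Laurent series ring
`B̂ = A((ξ))`, for `σ` a linear map on `A`. -/
def tauHat {k A : Type*} [Field k] [Ring A] [Algebra k A] (σ : A →ₗ[k] A)
    (y : LaurentSeries A) : LaurentSeries A where
  coeff i := ((-1 : k) ^ i) • σ (y.coeff i)
  isPWO_support' := y.isPWO_support.mono (by
    intro i hi
    simp only [Function.mem_support, ne_eq] at hi ⊢
    intro h
    exact hi (by rw [h, map_zero, smul_zero]))

/-!
If `σ` is injective, `τ̂` preserves the order of a Laurent series and sends its leading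
coefficient `a` to `±σ(a)`, so the coefficient of `τ̂(y) y` in degree `2 · order y` is
`±σ(a) a`. Hence an isotropic `y` makes its leading coefficient isotropic, and
conversely an isotropic `a ∈ A` stays isotropic as a constant series.
-/

section

variable {k A : Type*} [Field k] [Ring A] [Algebra k A] (σ : A →ₗ[k] A)

@[simp]
theorem tauHat_coeff (y : LaurentSeries A) (i : ℤ) :
    (tauHat σ y).coeff i = ((-1 : k) ^ i) • σ (y.coeff i) :=
  rfl

theorem tauHat_single_zero (a : A) :
    tauHat σ (HahnSeries.single 0 a) = HahnSeries.single 0 (σ a) := by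
  ext i
  rcases eq_or_ne i 0 with rfl | hi
  · simp
  · simp [HahnSeries.coeff_single_of_ne hi]

variable {σ}

theorem tauHat_coeff_eq_zero_iff (hσ : Function.Injective σ) (y : LaurentSeries A) (i : ℤ) :
    (tauHat σ y).coeff i = 0 ↔ y.coeff i = 0 := by
  simp [zpow_ne_zero, map_eq_zero_iff σ hσ]

theorem tauHat_eq_zero_iff (hσ : Function.Injective σ) {y : LaurentSeries A} :
    tauHat σ y = 0 ↔ y = 0 := by
  simp only [HahnSeries.ext_iff, funext_iff, HahnSeries.coeff_zero,
    tauHat_coeff_eq_zero_iff hσ]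

theorem order_tauHat (hσ : Function.Injective σ) (y : LaurentSeries A) :
    (tauHat σ y).order = y.order := by
  rcases eq_or_ne y 0 with rfl | hy
  · rw [(tauHat_eq_zero_iff hσ).2 rfl]
  have hy' : tauHat σ y ≠ 0 := (tauHat_eq_zero_iff hσ).not.2 hy
  apply le_antisymm <;> apply HahnSeries.order_le_of_coeff_ne_zero
  · rw [Ne, tauHat_coeff_eq_zero_iff hσ]
    exact HahnSeries.coeff_order_eq_zero.not.2 hy
  · rw [Ne, ← tauHat_coeff_eq_zero_iff hσ]
    exact HahnSeries.coeff_order_eq_zero.not.2 hy'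

theorem leadingCoeff_tauHat (hσ : Function.Injective σ) (y : LaurentSeries A) :
    (tauHat σ y).leadingCoeff = ((-1 : k) ^ y.order) • σ y.leadingCoeff := by
  rw [HahnSeries.leadingCoeff_eq, HahnSeries.leadingCoeff_eq, order_tauHat hσ, tauHat_coeff]

theorem leadingCoeff_isotropic_of_tauHat_mul_self (hσ : Function.Injective σ)
    {y : LaurentSeries A} (h : tauHat σ y * y = 0) :
    σ y.leadingCoeff * y.leadingCoeff = 0 := by
  have hlead := HahnSeries.coeff_mul_order_add_order (tauHat σ y) y
  rw [h, HahnSeries.coeff_zero, leadingCoeff_tauHat hσ, smul_mul_assoc, eq_comm,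
    smul_eq_zero] at hlead
  exact hlead.resolve_left (zpow_ne_zero _ (neg_ne_zero.2 one_ne_zero))

end

theorem isotropic_iff_laurent_isotropic_general
    (k A : Type*) [Field k] [Ring A] [Algebra k A]
    (σ : A →ₗ[k] A)
    (hσinv : ∀ x : A, σ (σ x) = x) :
    (∃ a : A, a ≠ 0 ∧ σ a * a = 0) ↔
      (∃ y : LaurentSeries A, y ≠ 0 ∧ tauHat σ y * y = 0) := by
  have hσ : Function.Injective σ := Function.LeftInverse.injective hσinv
  constructor
  · rintro ⟨a, ha, h⟩
    refine ⟨HahnSeries.single 0 a, by simpa using ha, ?_⟩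
    rw [tauHat_single_zero, HahnSeries.single_mul_single, h, HahnSeries.single_eq_zero]
  · rintro ⟨y, hy, h⟩
    exact ⟨y.leadingCoeff, HahnSeries.leadingCoeff_ne_zero.2 hy,
      leadingCoeff_isotropic_of_tauHat_mul_self hσ h⟩

/-- Let `k` be a field of characteristic 0, `A` a central simple
`k`-algebra and `σ` an involution of the first kind on `A`.  Let `B̂ = A((ξ))` with the
unitary involution `τ̂(∑ aᵢ ξ^i) = ∑ (−1)^i σ(aᵢ) ξ^i`.  Then `(A, σ)` is isotropic if
and only if `(B̂, τ̂)` is isotropic. -/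
theorem isotropic_iff_laurent_isotropic
    (k A : Type*) [Field k] [CharZero k] [Ring A] [Algebra k A]
    [Algebra.IsCentral k A] [IsSimpleRing A] [FiniteDimensional k A]
    (σ : A →ₗ[k] A) (hσmul : ∀ x y : A, σ (x * y) = σ y * σ x)
    (hσinv : ∀ x : A, σ (σ x) = x) :
    (∃ a : A, a ≠ 0 ∧ σ a * a = 0) ↔
      (∃ y : LaurentSeries A, y ≠ 0 ∧ tauHat σ y * y = 0) :=
  isotropic_iff_laurent_isotropic_general k A σ hσinv

end
end
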